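/- Assume every hospital's preference is substitutable. Fix a doctor preference profile P, run D-DA at P, let T be its number of iterations, let O^t be the set of offers made at iteration t, and define the accumulated offer sets O_A^t := ∪_{k=1}^{t} O^k. Then for every hospital h ∈ H: (a) C_h(O^t) = C_h(O_A^t) for all t = 1, …, T, and (b) the set of contracts involving h in the D-DA output equals C_h(O_A^T). -/
import Mathlib


set_option linter.unusedSectionVars false

namespace Matching

open Finset

/-- A many-to-one matching market with contracts: each contract `x` involves exactly one
doctor `xD x` and one hospital `xH x`; each hospital `h` has a fixed antisymmetric,
transitive and complete preference `prH h`, modelled as a linear order on sets of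
contracts (only its comparisons between allocations of contracts involving `h` matter). -/
structure Market (D H X : Type*) where
  xD : X → D
  xH : X → H
  prH : H → LinearOrder (Finset X)

/-- A doctor's preference: an antisymmetric, transitive and complete preference, modelled
as a linear order on sets of contracts (only comparisons between `∅` and singletons of
contracts involving the doctor matter). -/
abbrev Pref (X : Type*) := LinearOrder (Finset X)

/-- A profile of doctors' preferences. -/
abbrev Profile (D X : Type*) := D → Pref X

variable {D H X : Type*}
variable [DecidableEq D] [DecidableEq H] [DecidableEq X] [Fintype D] [Fintype H] [Fintype X]

/-- `Y_d` : the contracts in `Y` involving doctor `d`. -/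
def docPart (M : Market D H X) (Y : Finset X) (d : D) : Finset X :=
  Y.filter fun x => M.xD x = d

/-- `Y_h` : the contracts in `Y` involving hospital `h`. -/
def hospPart (M : Market D H X) (Y : Finset X) (h : H) : Finset X :=
  Y.filter fun x => M.xH x = h

/-- An allocation: distinct contracts involve distinct doctors. -/
def IsAllocation (M : Market D H X) (Z : Finset X) : Prop :=
  ∀ x ∈ Z, ∀ y ∈ Z, M.xD x = M.xD y → x = y

/-- `A(Y)` : the allocations contained in `Y`. -/
def allocs (M : Market D H X) (Y : Finset X) : Finset (Finset X) :=
  Y.powerset.filter fun Z => ∀ x ∈ Z, ∀ y ∈ Z, M.xD x = M.xD y → x = y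

lemma empty_mem_allocs (M : Market D H X) (Y : Finset X) : ∅ ∈ allocs M Y := by
  simp [allocs]

/-- The best allocation contained in `Y` according to the linear order `pr`. -/
def bestAlloc (M : Market D H X) (pr : Pref X) (Y : Finset X) : Finset X :=
  @Finset.max' _ pr (allocs M Y) ⟨∅, empty_mem_allocs M Y⟩

/-- `C_h(Y)` : hospital `h`'s choice set from `Y` (the `≻_h`-maximum of `A(Y_h)`). -/
def Ch (M : Market D H X) (h : H) (Y : Finset X) : Finset X :=
  bestAlloc M (M.prH h) (hospPart M Y h)

/-- `C_d(P_d, Y)` : doctor `d`'s choice set from `Y` (the `P_d`-maximum of `A(Y_d)`). -/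
def Cd (M : Market D H X) (Pd : Pref X) (d : D) (Y : Finset X) : Finset X :=
  bestAlloc M Pd (docPart M Y d)

/-- `C_H(Y) = ∪_{h ∈ H} C_h(Y)`. -/
def CH (M : Market D H X) (Y : Finset X) : Finset X :=
  univ.biUnion fun h => Ch M h Y

/-- `C_D(Y) = ∪_{d ∈ D} C_d(Y)`. -/
def CD (M : Market D H X) (P : Profile D X) (Y : Finset X) : Finset X :=
  univ.biUnion fun d => Cd M (P d) d Y

/-- Substitutability of hospital `h`'s preference: `x ∈ C_h(W)` and `x ∈ Y_h ⊆ W_h`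
imply `x ∈ C_h(Y)`. -/
def Substitutable (M : Market D H X) (h : H) : Prop :=
  ∀ W Y : Finset X, hospPart M Y h ⊆ hospPart M W h →
    ∀ x ∈ hospPart M Y h, x ∈ Ch M h W → x ∈ Ch M h Y

/-- The sets `X^t` of still-available contracts in the doctor-proposing deferred
acceptance algorithm (0-based: index `t` corresponds to iteration `t+1`). -/
def DDAsets (M : Market D H X) (P : Profile D X) : ℕ → Finset X
  | 0 => univ
  | t + 1 =>
      DDAsets M P t \ (CD M P (DDAsets M P t) \ CH M (CD M P (DDAsets M P t)))

/-- `O^t` : the offers made by the doctors at iteration `t` of D-DA (0-based). -/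
def offers (M : Market D H X) (P : Profile D X) (t : ℕ) : Finset X :=
  CD M P (DDAsets M P t)

/-- `O_A^t = ∪_{k ≤ t} O^k` : the accumulated offers up to iteration `t` (0-based). -/
def accOffers (M : Market D H X) (P : Profile D X) (t : ℕ) : Finset X :=
  (Finset.range (t + 1)).biUnion fun k => offers M P k

/-- D-DA has stopped at iteration `t`: all offers are accepted. -/
def DDAstopped (M : Market D H X) (P : Profile D X) (t : ℕ) : Prop :=
  CH M (offers M P t) = offers M P t

/-- The (0-based) last iteration of D-DA, i.e. `T - 1` where `T` is the number of
iterations of D-DA. -/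
noncomputable def DDAlast (M : Market D H X) (P : Profile D X) : ℕ :=
  sInf {t | DDAstopped M P t}

/-- The output of D-DA (the algorithm provably stops by iteration `Fintype.card X`,
and once stopped the offer sets stay constant). -/
def DDAoutput (M : Market D H X) (P : Profile D X) : Finset X :=
  CH M (offers M P (Fintype.card X))

/-- The doctor-optimal rule `φ̄`, giving doctor `d`'s outcome `φ̄_d(P)` (an element of
`A(𝐗_d)`, i.e. `∅` or a singleton). -/
def docOpt (M : Market D H X) (P : Profile D X) (d : D) : Finset X :=
  docPart M (DDAoutput M P) d

/-- The sets `X^t` of still-available contracts in the hospital-proposing deferred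
acceptance algorithm (0-based). -/
def HDAsets (M : Market D H X) (P : Profile D X) : ℕ → Finset X
  | 0 => univ
  | t + 1 =>
      HDAsets M P t \ (CH M (HDAsets M P t) \ CD M P (CH M (HDAsets M P t)))

/-- The offers made by the hospitals at iteration `t` of H-DA (0-based). -/
def hOffers (M : Market D H X) (P : Profile D X) (t : ℕ) : Finset X :=
  CH M (HDAsets M P t)

/-- The output of H-DA. -/
def HDAoutput (M : Market D H X) (P : Profile D X) : Finset X :=
  CD M P (hOffers M P (Fintype.card X))

/-- The hospital-optimal rule `φ̲`, giving doctor `d`'s outcome `φ̲_d(P)`. -/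
def hospOpt (M : Market D H X) (P : Profile D X) (d : D) : Finset X :=
  docPart M (HDAoutput M P) d

/-- The option set `O^φ(P_d)` left open by `P_d` at the rule `φ`. -/
def optionSet (rule : Profile D X → D → Finset X) (d : D) (Pd : Pref X) :
    Set (Finset X) :=
  {S | ∃ P : Profile D X, P d = Pd ∧ S = rule P d}

open scoped Classical in
/-- `W_d(pr, S)` : the `pr`-worst element of the (finite) set `S` of outcomes. -/
noncomputable def worstIn (pr : Pref X) (S : Set (Finset X)) : Finset X :=
  if h : S.Nonempty then
    @Finset.min' _ pr (Set.toFinite S).toFinset ((Set.Finite.toFinset_nonempty _).mpr h)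
  else ∅

open scoped Classical in
/-- The `pr`-best element of the (finite) set `S` of outcomes. -/
noncomputable def bestIn (pr : Pref X) (S : Set (Finset X)) : Finset X :=
  if h : S.Nonempty then
    @Finset.max' _ pr (Set.toFinite S).toFinset ((Set.Finite.toFinset_nonempty _).mpr h)
  else ∅

/-- `P'_d` is a manipulation of the rule at `P_d` : for some subprofile of the other
doctors, reporting `P'_d` gives a strictly `P_d`-better outcome than truth-telling. -/
def IsManip (rule : Profile D X → D → Finset X) (d : D) (Pd P'd : Pref X) : Prop :=
  ∃ P : Profile D X, P d = Pd ∧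
    Pd.lt (rule P d) (rule (Function.update P d P'd) d)

/-- `P'_d` is an obvious manipulation of the rule at `P_d`. -/
def IsObviousManip (rule : Profile D X → D → Finset X) (d : D) (Pd P'd : Pref X) :
    Prop :=
  IsManip rule d Pd P'd ∧
    (Pd.lt (worstIn Pd (optionSet rule d Pd)) (worstIn Pd (optionSet rule d P'd)) ∨
     Pd.lt (bestIn Pd (optionSet rule d Pd)) (bestIn Pd (optionSet rule d P'd)))

/-- A rule is not obviously manipulable (NOM). -/
def NOM (rule : Profile D X → D → Finset X) : Prop :=
  ∀ (d : D) (Pd P'd : Pref X), ¬ IsObviousManip rule d Pd P'd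

/-- A rule is obviously manipulable (OM). -/
def OM (rule : Profile D X → D → Finset X) : Prop :=
  ∃ (d : D) (Pd P'd : Pref X), IsObviousManip rule d Pd P'd

/-- `Y` is a stable allocation at the profile `P` : it is an individually rational
allocation and admits no blocking contract. -/
def IsStable (M : Market D H X) (P : Profile D X) (Y : Finset X) : Prop :=
  IsAllocation M Y ∧ CD M P Y = Y ∧ CH M Y = Y ∧
    ∀ x : X, x ∉ Y →
      ¬ (x ∈ Cd M (P (M.xD x)) (M.xD x) (insert x Y) ∧
         x ∈ Ch M (M.xH x) (insert x Y))

/-- `⌈kq⌉` where `k` is the number of stable allocations at `P`. -/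
noncomputable def quantileIndex (M : Market D H X) (P : Profile D X) (q : ℝ) : ℕ :=
  ⌈(Set.ncard {Y : Finset X | IsStable M P Y} : ℝ) * q⌉₊

/-- `Z` is doctor `d`'s `⌈kq⌉`-th best outcome (according to `P d`) among the `k` stable
allocations at `P` : it is the outcome of some stable allocation, strictly fewer than
`⌈kq⌉` stable allocations give `d` a strictly better outcome, and at least `⌈kq⌉` stable
allocations give `d` a weakly better outcome. -/
def IsQuantileOutcome (M : Market D H X) (P : Profile D X) (q : ℝ) (d : D)
    (Z : Finset X) : Prop :=
  (∃ Y : Finset X, IsStable M P Y ∧ docPart M Y d = Z) ∧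
    Set.ncard {Y : Finset X | IsStable M P Y ∧ (P d).lt Z (docPart M Y d)} <
      quantileIndex M P q ∧
    quantileIndex M P q ≤
      Set.ncard {Y : Finset X | IsStable M P Y ∧ (P d).le Z (docPart M Y d)}

section AuxLemmas

variable (M : Market D H X) (P : Profile D X)

lemma mem_allocs' {Y Z : Finset X} :
    Z ∈ allocs M Y ↔ Z ⊆ Y ∧ ∀ x ∈ Z, ∀ y ∈ Z, M.xD x = M.xD y → x = y := by
  simp [allocs]

lemma allocs_mono {S T : Finset X} (h : S ⊆ T) : allocs M S ⊆ allocs M T := by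
  intro Z hZ
  rw [mem_allocs'] at hZ ⊢
  exact ⟨hZ.1.trans h, hZ.2⟩

lemma bestAlloc_mem (pr : Pref X) (Y : Finset X) : bestAlloc M pr Y ∈ allocs M Y :=
  @Finset.max'_mem _ pr _ _

lemma bestAlloc_subset (pr : Pref X) (Y : Finset X) : bestAlloc M pr Y ⊆ Y :=
  ((mem_allocs' M).mp (bestAlloc_mem M pr Y)).1

lemma bestAlloc_eq_of_subset (pr : Pref X) {S T : Finset X}
    (hST : S ⊆ T) (hsub : bestAlloc M pr T ⊆ S) :
    bestAlloc M pr S = bestAlloc M pr T := by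
  have hT := bestAlloc_mem M pr T
  have hS : bestAlloc M pr T ∈ allocs M S :=
    (mem_allocs' M).mpr ⟨hsub, ((mem_allocs' M).mp hT).2⟩
  refine pr.le_antisymm _ _ ?_ ?_
  · exact @Finset.le_max' _ pr _ _ (allocs_mono M hST (bestAlloc_mem M pr S))
  · exact @Finset.le_max' _ pr _ _ hS

lemma Ch_subset_hospPart (h : H) (Y : Finset X) : Ch M h Y ⊆ hospPart M Y h :=
  bestAlloc_subset M _ _

lemma Cd_subset_docPart (Pd : Pref X) (d : D) (Y : Finset X) :
    Cd M Pd d Y ⊆ docPart M Y d :=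
  bestAlloc_subset M _ _

lemma mem_CD {Y : Finset X} {x : X} :
    x ∈ CD M P Y ↔ x ∈ Cd M (P (M.xD x)) (M.xD x) Y := by
  constructor
  · intro hx
    obtain ⟨d, _, hd⟩ := Finset.mem_biUnion.mp hx
    have : M.xD x = d := (Finset.mem_filter.mp (Cd_subset_docPart M _ _ _ hd)).2
    rwa [this]
  · intro hx
    exact Finset.mem_biUnion.mpr ⟨M.xD x, Finset.mem_univ _, hx⟩

lemma mem_CH {Y : Finset X} {x : X} :
    x ∈ CH M Y ↔ x ∈ Ch M (M.xH x) Y := by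
  constructor
  · intro hx
    obtain ⟨h, _, hh⟩ := Finset.mem_biUnion.mp hx
    have : M.xH x = h := (Finset.mem_filter.mp (Ch_subset_hospPart M _ _ hh)).2
    rwa [this]
  · intro hx
    exact Finset.mem_biUnion.mpr ⟨M.xH x, Finset.mem_univ _, hx⟩

lemma hospPart_CH (h : H) (Y : Finset X) : hospPart M (CH M Y) h = Ch M h Y := by
  ext x
  simp only [hospPart, Finset.mem_filter]
  constructor
  · rintro ⟨hx, hxh⟩
    have := (mem_CH M).mp hx
    rwa [hxh] at this
  · intro hx
    have hxh : M.xH x = h := (Finset.mem_filter.mp (Ch_subset_hospPart M _ _ hx)).2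
    exact ⟨(mem_CH M).mpr (by rwa [hxh]), hxh⟩

lemma CD_subset (Y : Finset X) : CD M P Y ⊆ Y := by
  refine Finset.biUnion_subset.mpr fun d _ => ?_
  exact (Cd_subset_docPart M _ _ _).trans (Finset.filter_subset _ _)

lemma CH_subset (Y : Finset X) : CH M Y ⊆ Y := by
  refine Finset.biUnion_subset.mpr fun h _ => ?_
  exact (Ch_subset_hospPart M _ _).trans (Finset.filter_subset _ _)

lemma offers_subset_DDAsets (t : ℕ) : offers M P t ⊆ DDAsets M P t :=
  CD_subset M P _

lemma DDAsets_succ (t : ℕ) :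
    DDAsets M P (t + 1) = DDAsets M P t \ (offers M P t \ CH M (offers M P t)) := rfl

lemma DDAsets_succ_subset (t : ℕ) : DDAsets M P (t + 1) ⊆ DDAsets M P t := by
  rw [DDAsets_succ]; exact Finset.sdiff_subset

lemma offers_persist {t : ℕ} {x : X} (hx : x ∈ offers M P t)
    (hCH : x ∈ CH M (offers M P t)) : x ∈ offers M P (t + 1) := by
  have hxCd : x ∈ Cd M (P (M.xD x)) (M.xD x) (DDAsets M P t) := (mem_CD M P).mp hx
  have hx1 : x ∈ DDAsets M P (t + 1) := by
    rw [DDAsets_succ, Finset.mem_sdiff]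
    exact ⟨offers_subset_DDAsets M P t hx, fun hc => (Finset.mem_sdiff.mp hc).2 hCH⟩
  have hkey : Cd M (P (M.xD x)) (M.xD x) (DDAsets M P t) ⊆
      docPart M (DDAsets M P (t + 1)) (M.xD x) := by
    intro y hy
    have halloc := (mem_allocs' M).mp (bestAlloc_mem M (P (M.xD x))
      (docPart M (DDAsets M P t) (M.xD x)))
    have hyd : M.xD y = M.xD x := (Finset.mem_filter.mp (halloc.1 hy)).2
    have hyx : y = x := halloc.2 y hy x hxCd hyd
    subst hyx
    exact Finset.mem_filter.mpr ⟨hx1, rfl⟩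
  have heq : Cd M (P (M.xD x)) (M.xD x) (DDAsets M P (t + 1)) =
      Cd M (P (M.xD x)) (M.xD x) (DDAsets M P t) :=
    bestAlloc_eq_of_subset M (P (M.xD x))
      (Finset.filter_subset_filter _ (DDAsets_succ_subset M P t)) hkey
  exact (mem_CD M P).mpr (heq ▸ hxCd)

lemma DDAsets_of_stopped {t : ℕ} (hs : DDAstopped M P t) :
    DDAsets M P (t + 1) = DDAsets M P t := by
  rw [DDAsets_succ]
  rw [DDAstopped] at hs
  rw [hs]
  simp

lemma stopped_mono {t s : ℕ} (hs : DDAstopped M P t) (h : t ≤ s) :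
    DDAstopped M P s ∧ offers M P s = offers M P t := by
  induction s, h using Nat.le_induction with
  | base => exact ⟨hs, rfl⟩
  | succ n hn ih =>
    have hsets : DDAsets M P (n + 1) = DDAsets M P n := DDAsets_of_stopped M P ih.1
    have hoff : offers M P (n + 1) = offers M P n := by
      unfold offers; rw [hsets]
    refine ⟨?_, hoff.trans ih.2⟩
    unfold DDAstopped
    rw [hoff]
    exact ih.1

lemma exists_stopped : ∃ t ≤ Fintype.card X, DDAstopped M P t := by
  have key : ∀ t : ℕ, (∃ k ≤ t, DDAstopped M P k) ∨
      (DDAsets M P t).card + t ≤ Fintype.card X := by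
    intro t
    induction t with
    | zero =>
      right
      simp [DDAsets]
    | succ t ih =>
      rcases ih with ⟨k, hk, hks⟩ | hcard
      · exact Or.inl ⟨k, hk.trans (Nat.le_succ t), hks⟩
      by_cases hs : DDAstopped M P t
      · exact Or.inl ⟨t, Nat.le_succ t, hs⟩
      right
      have hne : (offers M P t \ CH M (offers M P t)).Nonempty := by
        rw [Finset.sdiff_nonempty]
        intro hsub2
        exact hs (Finset.Subset.antisymm (CH_subset M _) hsub2)
      obtain ⟨x, hxmem⟩ := hne
      have hxX : x ∈ DDAsets M P t :=
        offers_subset_DDAsets M P t (Finset.mem_sdiff.mp hxmem).1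
      have hlt : (DDAsets M P (t + 1)).card < (DDAsets M P t).card := by
        apply Finset.card_lt_card
        refine ⟨DDAsets_succ_subset M P t, fun hsup => ?_⟩
        have hx1 : x ∈ DDAsets M P (t + 1) := hsup hxX
        rw [DDAsets_succ, Finset.mem_sdiff] at hx1
        exact hx1.2 hxmem
      omega
  rcases key (Fintype.card X) with ⟨k, hk, hks⟩ | hcard
  · exact ⟨k, hk, hks⟩
  · have hempty : DDAsets M P (Fintype.card X) = ∅ :=
      Finset.card_eq_zero.mp (by omega)
    refine ⟨Fintype.card X, le_rfl, ?_⟩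
    have hoff : offers M P (Fintype.card X) = ∅ :=
      Finset.subset_empty.mp (hempty ▸ offers_subset_DDAsets M P _)
    unfold DDAstopped
    rw [hoff]
    exact Finset.subset_empty.mp (CH_subset M _)

lemma accOffers_zero : accOffers M P 0 = offers M P 0 := by
  simp [accOffers]

lemma accOffers_succ (t : ℕ) :
    accOffers M P (t + 1) = offers M P (t + 1) ∪ accOffers M P t := by
  unfold accOffers
  rw [Finset.range_add_one, Finset.biUnion_insert]

lemma Ch_offers_eq (hsub : ∀ h : H, Substitutable M h) (h : H) :
    ∀ t : ℕ, Ch M h (offers M P t) = Ch M h (accOffers M P t) := by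
  intro t
  induction t with
  | zero => rw [accOffers_zero]
  | succ t ih =>
    have hAsub : accOffers M P t ⊆ accOffers M P (t + 1) := by
      rw [accOffers_succ]; exact Finset.subset_union_right
    have hOsub : offers M P (t + 1) ⊆ accOffers M P (t + 1) := by
      rw [accOffers_succ]; exact Finset.subset_union_left
    have hsubO : Ch M h (accOffers M P (t + 1)) ⊆ offers M P (t + 1) := by
      intro x hx
      have hxh := Ch_subset_hospPart M h _ hx
      have hxH : M.xH x = h := (Finset.mem_filter.mp hxh).2
      have hxA' : x ∈ accOffers M P (t + 1) := (Finset.mem_filter.mp hxh).1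
      rw [accOffers_succ, Finset.mem_union] at hxA'
      rcases hxA' with hO | hA
      · exact hO
      · have hxY : x ∈ hospPart M (accOffers M P t) h :=
          Finset.mem_filter.mpr ⟨hA, hxH⟩
        have hx2 : x ∈ Ch M h (accOffers M P t) :=
          hsub h _ _ (Finset.filter_subset_filter _ hAsub) x hxY hx
        rw [← ih] at hx2
        have hxO : x ∈ offers M P t :=
          (Finset.mem_filter.mp (Ch_subset_hospPart M h _ hx2)).1
        have hxCH : x ∈ CH M (offers M P t) :=
          (mem_CH M).mpr (by rwa [hxH])
        exact offers_persist M P hxO hxCH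
    have hS : hospPart M (offers M P (t + 1)) h ⊆
        hospPart M (accOffers M P (t + 1)) h :=
      Finset.filter_subset_filter _ hOsub
    have hsub2 : Ch M h (accOffers M P (t + 1)) ⊆
        hospPart M (offers M P (t + 1)) h := by
      intro x hx
      exact Finset.mem_filter.mpr
        ⟨hsubO hx, (Finset.mem_filter.mp (Ch_subset_hospPart M h _ hx)).2⟩
    exact bestAlloc_eq_of_subset M (M.prH h) hS hsub2

end AuxLemmas

/-- Lemma 2: under substitutability, for every hospital `h`, (a) `C_h(O^t) = C_h(O_A^t)`
at every iteration `t` of the run of D-DA (0-based, so `t` ranges over `0, …, T-1` where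
`T` is the number of iterations), and (b) the set of contracts involving `h` in the D-DA
output equals `C_h(O_A^T)`. -/
theorem Ch_offers_eq_Ch_accOffers (M : Market D H X) (P : Profile D X)
    (hsub : ∀ h : H, Substitutable M h) :
    ∀ h : H,
      (∀ t : ℕ, t ≤ DDAlast M P →
        Ch M h (offers M P t) = Ch M h (accOffers M P t)) ∧
      hospPart M (DDAoutput M P) h = Ch M h (accOffers M P (DDAlast M P)) := by
  intro h
  obtain ⟨T0, hT0le, hT0⟩ := exists_stopped M P
  have hlast : DDAstopped M P (DDAlast M P) := Nat.sInf_mem (⟨T0, hT0⟩ : {t | DDAstopped M P t}.Nonempty)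
  have hlastle : DDAlast M P ≤ Fintype.card X := le_trans (Nat.sInf_le hT0) hT0le
  have hoeq : offers M P (Fintype.card X) = offers M P (DDAlast M P) :=
    (stopped_mono M P hlast hlastle).2
  refine ⟨fun t _ => Ch_offers_eq M P hsub h t, ?_⟩
  calc hospPart M (DDAoutput M P) h
      = Ch M h (offers M P (Fintype.card X)) := hospPart_CH M h _
    _ = Ch M h (offers M P (DDAlast M P)) := by rw [hoeq]
    _ = Ch M h (accOffers M P (DDAlast M P)) := Ch_offers_eq M P hsub h _


end Matching
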